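/- arXiv:1811.01725 — 6 statements merged into one kernel-verified Lean document; each statement's English description precedes it below -/
import Mathlib

section
/- Let ν > 0 and t ∈ (0, T] with T > 0 and let N ∈ ℕ. Then (1/√t) · ∑_{k=1}^{N} (1 - exp(-ν π² k² t))² / (ν π² k²) ≤ 1/(π √ν) + 1/(ν π²) + 4 π √ν. -/
/-!
Since `0 ≤ 1 - e^{-x} ≤ min x 1`, the `k`-th term is at most `min t (1 / (a k²))` with `a = ν π²`.
Summing, the modes `k ≤ 1 / √(a t)` contribute at most `√(t / a)` and the tail of `∑ 1 / k²`
at most `2 √(t / a)`, so the left-hand side is at most `3 / (π √ν)`, which is dominated by the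
right-hand side.
-/

open Real Finset

lemma one_sub_exp_neg_sq_le_min {x : ℝ} (hx : 0 ≤ x) : (1 - exp (-x)) ^ 2 ≤ min x 1 := by
  have h_nonneg : 0 ≤ 1 - exp (-x) := sub_nonneg.mpr (exp_le_one_iff.mpr (neg_nonpos.mpr hx))
  have h_le_one : 1 - exp (-x) ≤ 1 := sub_le_self _ (exp_pos _).le
  have h_le_x : 1 - exp (-x) ≤ x := by linarith [one_sub_le_exp_neg x]
  calc (1 - exp (-x)) ^ 2 ≤ 1 - exp (-x) := by nlinarith
    _ ≤ min x 1 := le_min h_le_x h_le_one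

lemma sum_Icc_min_sq_inv_sq_le {s : ℝ} (hs : 0 < s) (N : ℕ) :
    ∑ k ∈ Icc 1 N, min (s ^ 2) ((k : ℝ) ^ 2)⁻¹ ≤ 3 * s := by
  set K := ⌊s⁻¹⌋₊
  have hK_le : (K : ℝ) ≤ s⁻¹ := Nat.floor_le (inv_nonneg.mpr hs.le)
  have hK_inv : ((K : ℝ) + 1)⁻¹ ≤ s :=
    (inv_le_comm₀ (by positivity) hs).mpr (Nat.lt_floor_add_one _).le
  have h_cover : Icc 1 N ⊆ Icc 1 K ∪ Ioo K (N + 1) := by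
    intro k hk
    simp only [mem_union, mem_Icc, mem_Ioo] at hk ⊢
    omega
  have h_disj : Disjoint (Icc 1 K) (Ioo K (N + 1)) := by
    rw [disjoint_left]
    intro k hk hk'
    simp only [mem_Icc, mem_Ioo] at hk hk'
    omega
  have h_head : ∑ k ∈ Icc 1 K, min (s ^ 2) ((k : ℝ) ^ 2)⁻¹ ≤ s :=
    calc ∑ k ∈ Icc 1 K, min (s ^ 2) ((k : ℝ) ^ 2)⁻¹ ≤ ∑ _k ∈ Icc 1 K, s ^ 2 :=
          sum_le_sum fun _ _ ↦ min_le_left _ _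
      _ = K * s ^ 2 := by simp
      _ ≤ s⁻¹ * s ^ 2 := by gcongr
      _ = s := by field_simp
  have h_tail : ∑ k ∈ Ioo K (N + 1), min (s ^ 2) ((k : ℝ) ^ 2)⁻¹ ≤ 2 * s :=
    calc ∑ k ∈ Ioo K (N + 1), min (s ^ 2) ((k : ℝ) ^ 2)⁻¹
        ≤ ∑ k ∈ Ioo K (N + 1), ((k : ℝ) ^ 2)⁻¹ := sum_le_sum fun _ _ ↦ min_le_right _ _
      _ ≤ 2 / (K + 1) := sum_Ioo_inv_sq_le K (N + 1)
      _ ≤ 2 * s := by rw [div_eq_mul_inv]; gcongr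
  calc ∑ k ∈ Icc 1 N, min (s ^ 2) ((k : ℝ) ^ 2)⁻¹
      ≤ ∑ k ∈ Icc 1 K ∪ Ioo K (N + 1), min (s ^ 2) ((k : ℝ) ^ 2)⁻¹ :=
        sum_le_sum_of_subset_of_nonneg h_cover fun _ _ _ ↦ by positivity
    _ = _ := sum_union h_disj
    _ ≤ 3 * s := by linarith

lemma one_sub_exp_neg_sq_div_le {a t : ℝ} (ha : 0 < a) (ht : 0 < t) (k : ℕ) :
    (1 - exp (-(a * k ^ 2 * t))) ^ 2 / (a * k ^ 2) ≤ a⁻¹ * min (a * t) ((k : ℝ) ^ 2)⁻¹ := by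
  rcases k.eq_zero_or_pos with rfl | hk
  · simp [mul_nonneg ha.le ht.le]
  have hak : 0 < a * (k : ℝ) ^ 2 := by positivity
  rw [mul_min_of_nonneg _ _ (inv_nonneg.mpr ha.le), inv_mul_cancel_left₀ ha.ne', ← mul_inv]
  refine (div_le_div_of_nonneg_right (one_sub_exp_neg_sq_le_min (by positivity)) hak.le).trans ?_
  rw [← min_div_div_right hak.le, mul_div_cancel_left₀ _ hak.ne', one_div]

lemma one_div_sqrt_mul_sum_one_sub_exp_neg_sq_div_le {a t : ℝ} (ha : 0 < a) (ht : 0 < t)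
    (N : ℕ) :
    (1 / √t) * ∑ k ∈ Icc 1 N, (1 - exp (-(a * k ^ 2 * t))) ^ 2 / (a * k ^ 2) ≤ 3 / √a := by
  have h_sq : a * t = √(a * t) ^ 2 := (sq_sqrt (by positivity)).symm
  have h_sum : ∑ k ∈ Icc 1 N, (1 - exp (-(a * k ^ 2 * t))) ^ 2 / (a * k ^ 2)
      ≤ a⁻¹ * (3 * √(a * t)) :=
    calc _ ≤ ∑ k ∈ Icc 1 N, a⁻¹ * min (a * t) ((k : ℝ) ^ 2)⁻¹ :=
          sum_le_sum fun k _ ↦ one_sub_exp_neg_sq_div_le ha ht k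
      _ = a⁻¹ * ∑ k ∈ Icc 1 N, min (√(a * t) ^ 2) ((k : ℝ) ^ 2)⁻¹ := by rw [mul_sum, ← h_sq]
      _ ≤ a⁻¹ * (3 * √(a * t)) := by
          gcongr
          exact sum_Icc_min_sq_inv_sq_le (by positivity) N
  calc (1 / √t) * ∑ k ∈ Icc 1 N, (1 - exp (-(a * k ^ 2 * t))) ^ 2 / (a * k ^ 2)
      ≤ (1 / √t) * (a⁻¹ * (3 * √(a * t))) := by gcongr
    _ = 3 / √a := by
      rw [sqrt_mul ha.le]
      field_simp
      rw [sq_sqrt ha.le]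

lemma three_div_le_one_div_add_one_div_sq_add {u : ℝ} (hu : 0 < u) :
    3 / u ≤ 1 / u + 1 / u ^ 2 + 4 * u := by
  have h_cubic : 0 ≤ 4 * u ^ 3 - 2 * u + 1 := by
    nlinarith [mul_nonneg hu.le (sq_nonneg (2 * u - 1)), sq_nonneg (2 * u - 3 / 4)]
  rw [← sub_nonneg]
  have h_eq : 1 / u + 1 / u ^ 2 + 4 * u - 3 / u = (4 * u ^ 3 - 2 * u + 1) / u ^ 2 := by
    field_simp
    ring
  rw [h_eq]
  positivity

open Real in
theorem stmt_5_general (ν T t : ℝ) (hν : 0 < ν) (ht : t ∈ Set.Ioc 0 T) (N : ℕ) :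
    (1 / Real.sqrt t) *
        ∑ k ∈ Finset.Icc 1 N,
          (1 - Real.exp (-(ν * π ^ 2 * k ^ 2 * t))) ^ 2 / (ν * π ^ 2 * k ^ 2) ≤
      1 / (π * Real.sqrt ν) + 1 / (ν * π ^ 2) + 4 * π * Real.sqrt ν := by
  have h_sqrt : √(ν * π ^ 2) = π * √ν := by
    rw [sqrt_mul hν.le, sqrt_sq pi_pos.le, mul_comm]
  have h_sq : ν * π ^ 2 = (π * √ν) ^ 2 := by
    rw [mul_pow, sq_sqrt hν.le, mul_comm]
  calc _ ≤ 3 / √(ν * π ^ 2) :=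
        one_div_sqrt_mul_sum_one_sub_exp_neg_sq_div_le (by positivity) ht.1 N
    _ ≤ _ := by
      rw [h_sqrt, h_sq, mul_assoc 4]
      exact three_div_le_one_div_add_one_div_sq_add (by positivity)

open Real in
theorem stmt_5 (ν T t : ℝ) (hν : 0 < ν) (hT : 0 < T) (ht : t ∈ Set.Ioc 0 T) (N : ℕ) :
    (1 / Real.sqrt t) *
        ∑ k ∈ Finset.Icc 1 N,
          (1 - Real.exp (-(ν * π ^ 2 * k ^ 2 * t))) ^ 2 / (ν * π ^ 2 * k ^ 2) ≤
      1 / (π * Real.sqrt ν) + 1 / (ν * π ^ 2) + 4 * π * Real.sqrt ν :=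
  stmt_5_general ν T t hν ht N
end

section
/- Let ν > 0, T > 0, t ∈ (0,T], N ∈ ℕ. Then (1/√t) · ∑_{k=1}^{N} (1 - exp(-ν π² k² t))² / (ν π² k²) ≥ ∫₀^{max{0, t(N+1)² − (1+√t)²}} (1 - exp(-ν π² min{1, t N²}))² / (2 ν π² (x + (1+√T)²)^{3/2}) dx. -/
/-!
Write `s = √t` and `c = (1 - e^{-νπ²})²`. For `k ≥ 1/s` one has `k²t ≥ 1`, so the `k`-th
summand is at least `c / (νπ²k²) ≥ c / (νπ²) · (1/k - 1/(k+1))`. Telescoping from `⌈1/s⌉` to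
`N` and using `s⌈1/s⌉ ≤ 1 + s` bounds the left side below by
`c / (νπ²) · (1/(1+s) - 1/(s(N+1)))`. This is the exact value of the integral with `T` replaced
by `t`, since `(x+a)^{-3/2}` has antiderivative `-2(x+a)^{-1/2}` and the upper limit is
`(s(N+1))² - (1+s)²`; the integrand decreases in `T`.
-/

open Real Finset

lemma intervalIntegrable_inv_add_rpow {a M : ℝ} (p : ℝ) (ha : 0 < a) (hM : 0 ≤ M) :
    IntervalIntegrable (fun x => ((x + a) ^ p)⁻¹) MeasureTheory.volume 0 M := by
  refine ContinuousOn.intervalIntegrable fun x hx => ?_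
  rw [Set.uIcc_of_le hM] at hx
  have hxa : 0 < x + a := by linarith [hx.1]
  exact ((continuousAt_id.add continuousAt_const).rpow_const (.inl hxa.ne')).inv₀
    (rpow_pos_of_pos hxa p).ne' |>.continuousWithinAt

lemma integral_inv_add_rpow_three_halves {a M : ℝ} (ha : 0 < a) (hM : 0 ≤ M) :
    ∫ x in (0:ℝ)..M, ((x + a) ^ ((3:ℝ) / 2))⁻¹
      = 2 * ((√a)⁻¹ - (√(M + a))⁻¹) := by
  have hderiv : ∀ x ∈ Set.uIcc 0 M,
      HasDerivAt (fun y => -2 * (y + a) ^ (-(1:ℝ) / 2)) ((x + a) ^ ((3:ℝ) / 2))⁻¹ x := by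
    intro x hx
    rw [Set.uIcc_of_le hM] at hx
    have hxa : 0 < x + a := by linarith [hx.1]
    refine ((((hasDerivAt_id x).add_const a).rpow_const (p := -(1:ℝ) / 2)
      (.inl hxa.ne')).const_mul (-2)).congr_deriv ?_
    rw [← rpow_neg hxa.le]
    norm_num
    ring
  rw [intervalIntegral.integral_eq_sub_of_hasDerivAt hderiv
    (intervalIntegrable_inv_add_rpow _ ha hM), zero_add, neg_div, rpow_neg ha.le,
    rpow_neg (by linarith), ← sqrt_eq_rpow, ← sqrt_eq_rpow]
  ring

lemma integral_inv_add_rpow_le_of_le {a b M : ℝ} (p : ℝ) (hp : 0 ≤ p) (ha : 0 < a)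
    (hab : a ≤ b) (hM : 0 ≤ M) :
    ∫ x in (0:ℝ)..M, ((x + b) ^ p)⁻¹ ≤ ∫ x in (0:ℝ)..M, ((x + a) ^ p)⁻¹ := by
  refine intervalIntegral.integral_mono_on hM (intervalIntegrable_inv_add_rpow p
    (ha.trans_le hab) hM) (intervalIntegrable_inv_add_rpow p ha hM) fun x hx => ?_
  have hxa : 0 < x + a := by linarith [hx.1]
  gcongr

lemma one_sub_exp_neg_sq_le {a u : ℝ} (ha : 0 ≤ a) (hu : 1 ≤ u) :
    (1 - exp (-a)) ^ 2 ≤ (1 - exp (-(a * u))) ^ 2 := by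
  have h : 0 ≤ 1 - exp (-a) := sub_nonneg.mpr (exp_le_one_iff.mpr (neg_nonpos.mpr ha))
  gcongr
  exact le_mul_of_one_le_right ha hu

lemma inv_sub_inv_le_inv_mul_sum {s C : ℝ} (hs : 0 < s) (hC : 0 ≤ C) {f : ℕ → ℝ}
    (hf_nonneg : ∀ k, 0 ≤ f k) (hf : ∀ k : ℕ, 1 ≤ s * k → C / k ^ 2 ≤ f k)
    {N : ℕ} (hN : 1 ≤ s * N) :
    C * ((1 + s)⁻¹ - (s * (N + 1))⁻¹) ≤ s⁻¹ * ∑ k ∈ Icc 1 N, f k := by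
  set k₀ := ⌈s⁻¹⌉₊
  have hk₀ : 1 ≤ s * k₀ := by
    simpa [hs.ne'] using mul_le_mul_of_nonneg_left (Nat.le_ceil s⁻¹) hs.le
  have hsk₀ : s * k₀ ≤ 1 + s := by
    have := mul_le_mul_of_nonneg_left (Nat.ceil_lt_add_one (inv_nonneg.mpr hs.le)).le hs.le
    rwa [mul_add, mul_inv_cancel₀ hs.ne', mul_one] at this
  have hk₀_pos : 0 < k₀ := Nat.ceil_pos.mpr (inv_pos.mpr hs)
  have hk₀N : k₀ ≤ N := Nat.ceil_le.mpr ((inv_le_iff_one_le_mul₀' hs).mpr hN)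
  have htail : C * ((k₀ : ℝ)⁻¹ - ((N : ℝ) + 1)⁻¹) ≤ ∑ k ∈ Icc k₀ N, f k := by
    calc C * ((k₀ : ℝ)⁻¹ - ((N : ℝ) + 1)⁻¹)
        = ∑ k ∈ Icc k₀ N, C * ((k : ℝ)⁻¹ - ((k : ℝ) + 1)⁻¹) := by
          have h := sum_Icc_sub hk₀N fun k : ℕ => -(k : ℝ)⁻¹
          push_cast [neg_sub_neg] at h
          rw [← mul_sum, h]
      _ ≤ ∑ k ∈ Icc k₀ N, C / k ^ 2 := by
          refine sum_le_sum fun k hk => ?_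
          have hk : (0 : ℝ) < k := by
            exact_mod_cast hk₀_pos.trans_le (mem_Icc.mp hk).1
          rw [inv_sub_inv hk.ne' (by positivity), add_sub_cancel_left, one_div, sq,
            div_eq_mul_inv C]
          gcongr
          linarith
      _ ≤ ∑ k ∈ Icc k₀ N, f k := by
          refine sum_le_sum fun k hk => hf k (hk₀.trans ?_)
          gcongr
          exact_mod_cast (mem_Icc.mp hk).1
  calc C * ((1 + s)⁻¹ - (s * (N + 1))⁻¹)
      ≤ C * ((s * k₀)⁻¹ - (s * (N + 1))⁻¹) := by gcongr
    _ = s⁻¹ * (C * ((k₀ : ℝ)⁻¹ - ((N : ℝ) + 1)⁻¹)) := by rw [mul_inv, mul_inv]; ring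
    _ ≤ s⁻¹ * ∑ k ∈ Icc k₀ N, f k := by gcongr
    _ ≤ s⁻¹ * ∑ k ∈ Icc 1 N, f k := by
        gcongr ?_ * ?_
        exact sum_le_sum_of_subset_of_nonneg (Icc_subset_Icc hk₀_pos le_rfl)
          fun k _ _ => hf_nonneg k

open Real in
theorem stmt_6_general (ν T t : ℝ) (hν : 0 < ν) (ht : t ∈ Set.Ioc 0 T) (N : ℕ) :
    (1 / Real.sqrt t) *
        ∑ k ∈ Finset.Icc 1 N,
          (1 - Real.exp (-(ν * π ^ 2 * k ^ 2 * t))) ^ 2 / (ν * π ^ 2 * k ^ 2) ≥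
      ∫ x in (0:ℝ)..(max 0 (t * (N + 1) ^ 2 - (1 + Real.sqrt t) ^ 2)),
        (1 - Real.exp (-(ν * π ^ 2 * min 1 (t * N ^ 2)))) ^ 2 /
          (2 * ν * π ^ 2 * (x + (1 + Real.sqrt T) ^ 2) ^ ((3:ℝ) / 2)) := by
  obtain ⟨ht0, htT⟩ := ht
  have hst : √t ^ 2 = t := sq_sqrt ht0.le
  rcases le_or_gt (t * (N + 1) ^ 2 - (1 + √t) ^ 2) 0 with hM | hM
  · rw [max_eq_left hM, intervalIntegral.integral_same]
    positivity
  rw [max_eq_right hM.le]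
  have hupper : t * (N + 1) ^ 2 - (1 + √t) ^ 2 + (1 + √t) ^ 2 = (√t * (N + 1)) ^ 2 := by
    rw [sub_add_cancel, mul_pow, hst]
  have hsN : 1 + √t < √t * (N + 1) :=
    lt_of_pow_lt_pow_left₀ 2 (by positivity) (by linarith)
  have hmin : min 1 (t * N ^ 2) = 1 := min_eq_left (by nlinarith)
  simp only [hmin, mul_one, one_div, ge_iff_le]
  set c := (1 - exp (-(ν * π ^ 2))) ^ 2
  have hintegrand : ∀ b x : ℝ, c / (2 * ν * π ^ 2 * (x + b) ^ ((3:ℝ) / 2))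
      = c / (2 * ν * π ^ 2) * ((x + b) ^ ((3:ℝ) / 2))⁻¹ := fun _ _ => by ring
  simp only [hintegrand, intervalIntegral.integral_const_mul]
  set M := t * (N + 1) ^ 2 - (1 + √t) ^ 2
  calc _ ≤ c / (2 * ν * π ^ 2) * ∫ x in (0:ℝ)..M, ((x + (1 + √t) ^ 2) ^ ((3:ℝ) / 2))⁻¹ := by
        gcongr
        exact integral_inv_add_rpow_le_of_le _ (by norm_num) (by positivity)
          (by gcongr) hM.le
    _ = c / (ν * π ^ 2) * ((1 + √t)⁻¹ - (√t * (N + 1))⁻¹) := by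
        rw [integral_inv_add_rpow_three_halves (by positivity) hM.le, hupper,
          sqrt_sq (by positivity), sqrt_sq (by positivity)]
        ring
    _ ≤ _ := by
        refine inv_sub_inv_le_inv_mul_sum (by positivity) (by positivity) (fun k => by positivity)
          (fun k hk => ?_) (by linarith)
        rw [div_div, mul_assoc _ ((k : ℝ) ^ 2)]
        gcongr
        exact one_sub_exp_neg_sq_le (by positivity) (by nlinarith)

open Real in
theorem stmt_6 (ν T t : ℝ) (hν : 0 < ν) (hT : 0 < T) (ht : t ∈ Set.Ioc 0 T) (N : ℕ) :
    (1 / Real.sqrt t) *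
        ∑ k ∈ Finset.Icc 1 N,
          (1 - Real.exp (-(ν * π ^ 2 * k ^ 2 * t))) ^ 2 / (ν * π ^ 2 * k ^ 2) ≥
      ∫ x in (0:ℝ)..(max 0 (t * (N + 1) ^ 2 - (1 + Real.sqrt t) ^ 2)),
        (1 - Real.exp (-(ν * π ^ 2 * min 1 (t * N ^ 2)))) ^ 2 /
          (2 * ν * π ^ 2 * (x + (1 + Real.sqrt T) ^ 2) ^ ((3:ℝ) / 2)) :=
  stmt_6_general ν T t hν ht N
end

section
/- For every ν > 0, ∫₀^∞ (1 - exp(-4 ν π² x))² / (2 ν π² x^{3/2}) dx ≤ 1/(ν π²) + 4 π √ν. -/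
open Real MeasureTheory Set

open Real in
theorem stmt_8 (ν : ℝ) (hν : 0 < ν) :
    ∫ x in Set.Ioi (0:ℝ),
        (1 - Real.exp (-(4 * ν * π ^ 2 * x))) ^ 2 / (2 * ν * π ^ 2 * x ^ ((3:ℝ) / 2)) ≤
      1 / (ν * π ^ 2) + 4 * π * Real.sqrt ν := by
  have hπ : 0 < π := Real.pi_pos
  set c : ℝ := ν * π ^ 2 with hc
  have hc0 : 0 < c := by positivity
  set x₀ : ℝ := 1 / (4 * c) with hx₀def
  have hx₀ : 0 < x₀ := by positivity
  set s : ℝ := Real.sqrt ν with hs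
  have hs0 : 0 < s := Real.sqrt_pos.mpr hν
  have hs2 : s ^ 2 = ν := Real.sq_sqrt hν.le
  -- sqrt of x₀
  have hsx₀ : Real.sqrt x₀ = 1 / (2 * π * s) := by
    have : x₀ = (1 / (2 * π * s)) ^ 2 := by
      rw [hx₀def, hc]
      field_simp
      nlinarith [hs2]
    rw [this, Real.sqrt_sq (by positivity)]
  set g : ℝ → ℝ := fun x =>
    if x ≤ x₀ then 8 * c * x ^ ((1:ℝ)/2) else (1/(2*c)) * x ^ (-(3:ℝ)/2) with hg
  have hgIoc : IntegrableOn g (Ioc 0 x₀) := by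
    have h1 : IntegrableOn (fun x : ℝ => 8 * c * x ^ ((1:ℝ)/2)) (Ioc 0 x₀) := by
      have := (intervalIntegral.intervalIntegrable_rpow' (a := (0:ℝ)) (b := x₀) (r := (1:ℝ)/2)
        (by norm_num)).const_mul (8 * c)
      rwa [intervalIntegrable_iff_integrableOn_Ioc_of_le hx₀.le] at this
    refine h1.congr_fun (fun x hx => ?_) measurableSet_Ioc
    simp [hg, hx.2]
  have hgIoi : IntegrableOn g (Ioi x₀) := by
    have h1 : IntegrableOn (fun x : ℝ => (1/(2*c)) * x ^ (-(3:ℝ)/2)) (Ioi x₀) := by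
      exact (integrableOn_Ioi_rpow_of_lt (by norm_num) hx₀).const_mul _
    refine h1.congr_fun (fun x hx => ?_) measurableSet_Ioi
    simp [hg, not_le.mpr (mem_Ioi.mp hx)]
  have hgInt : IntegrableOn g (Ioi 0) := by
    have := hgIoc.union hgIoi
    rwa [Ioc_union_Ioi_eq_Ioi hx₀.le] at this
  -- pointwise bound
  have hbound : ∀ x ∈ Ioi (0:ℝ),
      (1 - Real.exp (-(4 * ν * π ^ 2 * x))) ^ 2 / (2 * ν * π ^ 2 * x ^ ((3:ℝ) / 2)) ≤ g x := by
    intro x hx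
    have hx0 : 0 < x := hx
    have hxx : Real.sqrt x * Real.sqrt x = x := Real.mul_self_sqrt hx0.le
    have hsqx : 0 < Real.sqrt x := Real.sqrt_pos.mpr hx0
    have hx32 : x ^ ((3:ℝ)/2) = x * Real.sqrt x := by
      rw [show (3:ℝ)/2 = 1 + 1/2 by norm_num, Real.rpow_add hx0, Real.rpow_one,
        ← Real.sqrt_eq_rpow]
    have hx12 : x ^ ((1:ℝ)/2) = Real.sqrt x := (Real.sqrt_eq_rpow x).symm
    have hxm32 : x ^ (-(3:ℝ)/2) = 1 / (x * Real.sqrt x) := by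
      rw [show -(3:ℝ)/2 = -((3:ℝ)/2) by norm_num, Real.rpow_neg hx0.le, hx32, one_div]
    have ha : 0 < 4 * c * x := by positivity
    have hee : Real.exp (-(4 * ν * π ^ 2 * x)) = Real.exp (-(4 * c * x)) := by
      rw [hc]; ring_nf
    have he1 : Real.exp (-(4 * c * x)) ≤ 1 := by
      rw [show (1:ℝ) = Real.exp 0 by simp]
      exact Real.exp_le_exp.mpr (by linarith)
    have he0 : 0 < Real.exp (-(4 * c * x)) := Real.exp_pos _
    have hle : 1 - Real.exp (-(4 * c * x)) ≤ 4 * c * x := by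
      nlinarith [Real.add_one_le_exp (-(4 * c * x))]
    have hge : 0 ≤ 1 - Real.exp (-(4 * c * x)) := by linarith
    have hden : (2 * ν * π ^ 2 * x ^ ((3:ℝ)/2)) = 2 * c * (x * Real.sqrt x) := by
      rw [hx32, hc]; ring
    rw [hee, hden, hg]
    by_cases hcase : x ≤ x₀
    · simp only [hcase, if_true, hx12]
      rw [div_le_iff₀ (by positivity)]
      nlinarith [sq_nonneg (1 - Real.exp (-(4 * c * x))), mul_pos hc0 hx0,
        mul_le_mul hle hle hge (le_of_lt ha)]
    · simp only [hcase, if_false, hxm32]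
      rw [div_le_iff₀ (by positivity)]
      have h1 : (1 - Real.exp (-(4 * c * x))) ^ 2 ≤ 1 := by nlinarith
      calc (1 - Real.exp (-(4 * c * x))) ^ 2 ≤ 1 := h1
        _ = 1 / (2 * c) * (1 / (x * Real.sqrt x)) * (2 * c * (x * Real.sqrt x)) := by
            field_simp
  -- integral mono
  have hmono : (∫ x in Set.Ioi (0:ℝ),
      (1 - Real.exp (-(4 * ν * π ^ 2 * x))) ^ 2 / (2 * ν * π ^ 2 * x ^ ((3:ℝ) / 2)))
      ≤ ∫ x in Set.Ioi (0:ℝ), g x := by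
    apply integral_mono_of_nonneg
    · filter_upwards [ae_restrict_mem measurableSet_Ioi] with x hx
      have hx0 : (0:ℝ) < x := hx
      have : 0 < x ^ ((3:ℝ)/2) := Real.rpow_pos_of_pos hx0 _
      positivity
    · exact hgInt
    · filter_upwards [ae_restrict_mem measurableSet_Ioi] with x hx
      exact hbound x hx
  -- compute ∫ g
  have hsplit : (∫ x in Set.Ioi (0:ℝ), g x)
      = (∫ x in Ioc (0:ℝ) x₀, g x) + ∫ x in Ioi x₀, g x := by
    rw [← setIntegral_union (Ioc_disjoint_Ioi le_rfl) measurableSet_Ioi hgIoc hgIoi,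
      Ioc_union_Ioi_eq_Ioi hx₀.le]
  have h1 : (∫ x in Ioc (0:ℝ) x₀, g x) = 8 * c * (x₀ ^ ((3:ℝ)/2) / (3/2)) := by
    rw [show (∫ x in Ioc (0:ℝ) x₀, g x) = ∫ x in Ioc (0:ℝ) x₀, 8 * c * x ^ ((1:ℝ)/2) from
      setIntegral_congr_fun measurableSet_Ioc (fun x hx => by simp [hg, hx.2])]
    rw [← intervalIntegral.integral_of_le hx₀.le, intervalIntegral.integral_const_mul,
      integral_rpow (Or.inl (by norm_num))]
    norm_num
  have h2 : (∫ x in Ioi x₀, g x) = (1/(2*c)) * (2 * x₀ ^ (-(1:ℝ)/2)) := by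
    rw [show (∫ x in Ioi x₀, g x) = ∫ x in Ioi x₀, (1/(2*c)) * x ^ (-(3:ℝ)/2) from
      setIntegral_congr_fun measurableSet_Ioi
        (fun x hx => by simp [hg, not_le.mpr (mem_Ioi.mp hx)])]
    rw [MeasureTheory.integral_const_mul, integral_Ioi_rpow_of_lt (by norm_num) hx₀]
    norm_num
    exact Or.inl (by ring)
  -- evaluate the rpow values
  have hx32 : x₀ ^ ((3:ℝ)/2) = x₀ * Real.sqrt x₀ := by
    rw [show (3:ℝ)/2 = 1 + 1/2 by norm_num, Real.rpow_add hx₀, Real.rpow_one,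
      ← Real.sqrt_eq_rpow]
  have hxm12 : x₀ ^ (-(1:ℝ)/2) = 1 / Real.sqrt x₀ := by
    rw [show -(1:ℝ)/2 = -((1:ℝ)/2) by norm_num, Real.rpow_neg hx₀.le, ← Real.sqrt_eq_rpow,
      one_div]
  have hgval : (∫ x in Set.Ioi (0:ℝ), g x) = 8 / (3 * π * s) := by
    have hcval : c = s ^ 2 * π ^ 2 := by rw [hs2]
    rw [hsplit, h1, h2, hx32, hxm12, hsx₀, hx₀def, hcval]
    field_simp
    ring
  rw [hgval] at hmono
  refine hmono.trans ?_
  -- final: 8/(3πs) ≤ 1/(s²π²) + 4πs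
  clear hgIoc hgIoi hgInt hbound hmono hsplit h1 h2 hx32 hxm12 hgval hsx₀ hg g hx₀ hx₀def x₀
  clear_value c s
  subst hc
  rw [← hs2]
  rw [div_le_iff₀ (by positivity)]
  have h := mul_nonneg (mul_nonneg (by norm_num : (0:ℝ) ≤ 3)
    (by positivity : (0:ℝ) ≤ π * s + 1)) (sq_nonneg (2 * π * s - 1))
  have hps : 0 < π * s := by positivity
  have hut : (1 / (s ^ 2 * π ^ 2)) * (π * s) ^ 2 = 1 := by field_simp
  nlinarith [h, hps, hut, mul_pos hps hps]
end

section
/- Let ν > 0, T > 0, N ∈ ℕ. Then ∑_{k=N+1}^∞ (1 - exp(-2 ν π² k² T)) / (2 ν π² k²) ≥ (1 - exp(-2 ν π² T)) / (4 ν π² N). -/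
/-!
Write `a = 2νπ²` and `c = 1 - exp (-aT)`. Since `k² ≥ 1`, every numerator `1 - exp (-a k² T)`
is at least `c`, so the series dominates `(c / a) ∑_{k > N} 1 / k²`. Comparing `1 / k²` with the
telescoping terms `1 / k - 1 / (k + 1)` bounds that sum below by `1 / (N + 1) ≥ 1 / (2N)`.
-/

open Real Filter Topology

lemma hasSum_one_div_add_sub_one_div_add_succ {a : ℝ} (ha : 0 < a) :
    HasSum (fun k : ℕ => 1 / ((k : ℝ) + a) - 1 / ((k : ℝ) + a + 1)) (1 / a) := by
  have hnonneg : ∀ k : ℕ, 0 ≤ 1 / ((k : ℝ) + a) - 1 / ((k : ℝ) + a + 1) := fun k =>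
    sub_nonneg.2 (one_div_le_one_div_of_le (by positivity) (by linarith))
  have hpartial : ∀ n : ℕ,
      ∑ i ∈ Finset.range n, (1 / ((i : ℝ) + a) - 1 / ((i : ℝ) + a + 1)) =
        1 / a - 1 / ((n : ℝ) + a) := fun n => by
    simpa [add_right_comm] using Finset.sum_range_sub' (fun i : ℕ => 1 / ((i : ℝ) + a)) n
  have hlim : Tendsto (fun n : ℕ => 1 / ((n : ℝ) + a)) atTop (𝓝 0) :=
    tendsto_const_nhds.div_atTop (tendsto_atTop_add_const_right _ a tendsto_natCast_atTop_atTop)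
  refine (hasSum_iff_tendsto_nat_of_nonneg hnonneg _).2 ?_
  simp only [hpartial]
  simpa using tendsto_const_nhds.sub hlim

lemma summable_one_div_nat_add_sq {a : ℝ} (ha : 0 < a) :
    Summable fun k : ℕ => 1 / ((k : ℝ) + a) ^ 2 := by
  refine ((summable_one_div_nat_add_rpow a 2).2 one_lt_two).congr fun k => ?_
  rw [abs_of_pos (by positivity), rpow_two]

lemma one_div_le_tsum_one_div_nat_add_sq {a : ℝ} (ha : 0 < a) :
    1 / a ≤ ∑' k : ℕ, 1 / ((k : ℝ) + a) ^ 2 := by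
  have htelescoping := hasSum_one_div_add_sub_one_div_add_succ ha
  rw [← htelescoping.tsum_eq]
  refine htelescoping.summable.tsum_le_tsum (fun k => ?_) (summable_one_div_nat_add_sq ha)
  have hk : 0 < (k : ℝ) + a := by positivity
  have hterm : 1 / ((k : ℝ) + a) - 1 / ((k : ℝ) + a + 1) =
      1 / (((k : ℝ) + a) * ((k : ℝ) + a + 1)) := by
    field_simp
    ring
  rw [hterm]
  exact one_div_le_one_div_of_le (by positivity) (by nlinarith)

lemma one_sub_exp_neg_div_nonneg {a T y : ℝ} (ha : 0 ≤ a) (hT : 0 ≤ T) :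
    0 ≤ (1 - exp (-(a * y ^ 2 * T))) / (a * y ^ 2) := by
  apply div_nonneg _ (by positivity)
  linarith [exp_le_one_iff.2 (neg_nonpos.2 (by positivity : 0 ≤ a * y ^ 2 * T))]

lemma one_sub_exp_neg_div_le {a T y : ℝ} (ha : 0 ≤ a) :
    (1 - exp (-(a * y ^ 2 * T))) / (a * y ^ 2) ≤ 1 / a * (1 / y ^ 2) := by
  rw [one_div_mul_one_div]
  exact div_le_div_of_nonneg_right (by linarith [exp_pos (-(a * y ^ 2 * T))]) (by positivity)

lemma le_one_sub_exp_neg_div {a T y : ℝ} (ha : 0 ≤ a) (hT : 0 ≤ T) (hy : 1 ≤ y) :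
    (1 - exp (-(a * T))) / a * (1 / y ^ 2) ≤ (1 - exp (-(a * y ^ 2 * T))) / (a * y ^ 2) := by
  have hy2 : 1 ≤ y ^ 2 := one_le_pow₀ hy
  rw [div_mul_div_comm, mul_one]
  gcongr
  nlinarith

lemma div_two_mul_le_div_mul_succ {b c : ℝ} (hb : 0 < b) (hc : 0 ≤ c) (N : ℕ) :
    c / (2 * b * N) ≤ c / b * (1 / ((N : ℝ) + 1)) := by
  rcases N.eq_zero_or_pos with rfl | hN
  · simp only [Nat.cast_zero, mul_zero, div_zero]
    positivity
  have hN : (1 : ℝ) ≤ N := by exact_mod_cast hN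
  rw [div_mul_div_comm, mul_one]
  apply div_le_div_of_nonneg_left hc (by positivity)
  nlinarith

open Real in
theorem stmt_10 (ν T : ℝ) (hν : 0 < ν) (hT : 0 < T) (N : ℕ) :
    ∑' k : ℕ,
        (1 - Real.exp (-(2 * ν * π ^ 2 * ((k : ℝ) + N + 1) ^ 2 * T))) /
          (2 * ν * π ^ 2 * ((k : ℝ) + N + 1) ^ 2) ≥
      (1 - Real.exp (-(2 * ν * π ^ 2 * T))) / (4 * ν * π ^ 2 * N) := by
  set a := 2 * ν * π ^ 2 with ha_def
  have ha : 0 < a := by positivity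
  have hc : 0 ≤ 1 - exp (-(a * T)) := by
    linarith [exp_le_one_iff.2 (neg_nonpos.2 (by positivity : 0 ≤ a * T))]
  have hy : ∀ k : ℕ, 1 ≤ (k : ℝ) + N + 1 := fun k =>
    le_add_of_nonneg_left (by positivity)
  have hsq : Summable fun k : ℕ => 1 / ((k : ℝ) + N + 1) ^ 2 := by
    simpa only [add_assoc] using summable_one_div_nat_add_sq (a := (N : ℝ) + 1) (by positivity)
  have hsum_sq : 1 / ((N : ℝ) + 1) ≤ ∑' k : ℕ, 1 / ((k : ℝ) + N + 1) ^ 2 := by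
    simpa only [add_assoc] using
      one_div_le_tsum_one_div_nat_add_sq (a := (N : ℝ) + 1) (by positivity)
  have hsummable : Summable fun k : ℕ =>
      (1 - exp (-(a * ((k : ℝ) + N + 1) ^ 2 * T))) / (a * ((k : ℝ) + N + 1) ^ 2) :=
    (hsq.mul_left (1 / a)).of_nonneg_of_le (fun _ => one_sub_exp_neg_div_nonneg ha.le hT.le)
      fun _ => one_sub_exp_neg_div_le ha.le
  calc (1 - exp (-(a * T))) / (4 * ν * π ^ 2 * N)
      = (1 - exp (-(a * T))) / (2 * a * N) := by rw [ha_def]; ring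
    _ ≤ (1 - exp (-(a * T))) / a * (1 / ((N : ℝ) + 1)) := div_two_mul_le_div_mul_succ ha hc N
    _ ≤ (1 - exp (-(a * T))) / a * ∑' k : ℕ, 1 / ((k : ℝ) + N + 1) ^ 2 := by gcongr
    _ = ∑' k : ℕ, (1 - exp (-(a * T))) / a * (1 / ((k : ℝ) + N + 1) ^ 2) := tsum_mul_left.symm
    _ ≤ _ := (hsq.mul_left _).tsum_le_tsum
        (fun k => le_one_sub_exp_neg_div ha.le hT.le (hy k)) hsummable
end

section
/- Let ν > 0, T > 0, M ∈ ℕ with M ≥ 1, and N ∈ ℕ. Then ∑_{k=1}^{N} ((1 - exp(-2 ν π² k² T))/(2 ν π² k²)) · (1 - exp(-ν π² k² T/M))² ≤ (√T/(2 √M)) · (1/(π √ν) + 1/(ν π²) + 4 π √ν). -/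
/-!
Write `λₖ = ν π² k²` and `τ = T / M`. Since `1 - e^{-x} ≤ min x 1`, the `k`-th term is at most
`min (λₖ τ² / 2) (1 / (2 λₖ))`. Splitting the sum at `ρ = 1 / (π √(ν τ))`, where `λₖ τ ≈ 1`, the
low modes contribute at most `ν π² τ² ρ³ / 2` and the high modes, by `∑_{k > K} k⁻² ≤ 2 / (K + 1)`,
at most `1 / (ν π² ρ)`; both are multiples of `√τ / (π √ν)`.
-/

open Real Finset

lemma Real.one_sub_exp_neg_nonneg {x : ℝ} (hx : 0 ≤ x) : 0 ≤ 1 - exp (-x) :=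
  sub_nonneg.2 (exp_le_one_iff.2 (neg_nonpos.2 hx))

lemma Real.one_sub_exp_neg_le_one (x : ℝ) : 1 - exp (-x) ≤ 1 :=
  sub_le_self _ (exp_pos _).le

lemma Real.one_sub_exp_neg_le_self (x : ℝ) : 1 - exp (-x) ≤ x := by
  linarith [one_sub_le_exp_neg x]

section ModeError

variable {a T τ : ℝ}

noncomputable def expEulerModeError (a T τ : ℝ) : ℝ :=
  (1 - exp (-(2 * a * T))) / (2 * a) * (1 - exp (-(a * τ))) ^ 2

lemma expEulerModeError_le_mul_sq (ha : 0 < a) (hτ : 0 ≤ τ) :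
    expEulerModeError a T τ ≤ a * τ ^ 2 / 2 :=
  calc _ ≤ 1 / (2 * a) * (a * τ) ^ 2 := by
        unfold expEulerModeError
        gcongr
        · exact one_sub_exp_neg_le_one _
        · exact one_sub_exp_neg_nonneg (by positivity)
        · exact one_sub_exp_neg_le_self _
    _ = a * τ ^ 2 / 2 := by field_simp

lemma expEulerModeError_le_inv (ha : 0 < a) (hτ : 0 ≤ τ) :
    expEulerModeError a T τ ≤ 1 / (2 * a) :=
  calc _ ≤ 1 / (2 * a) * 1 ^ 2 := by
        unfold expEulerModeError
        gcongr
        · exact one_sub_exp_neg_le_one _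
        · exact one_sub_exp_neg_nonneg (by positivity)
        · exact one_sub_exp_neg_le_one _
    _ = 1 / (2 * a) := by ring

end ModeError

lemma sum_Icc_le_of_le_mul_sq_of_le_div_sq {f : ℕ → ℝ} {α β : ℝ} (hα : 0 ≤ α) (hβ : 0 ≤ β)
    (h_low : ∀ k, 1 ≤ k → f k ≤ α * k ^ 2) (h_high : ∀ k, 1 ≤ k → f k ≤ β / k ^ 2)
    {ρ : ℝ} (hρ : 0 < ρ) (N : ℕ) :
    ∑ k ∈ Icc 1 N, f k ≤ α * ρ ^ 3 + 2 * β / ρ := by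
  set K := ⌊ρ⌋₊
  rw [← sum_filter_add_sum_filter_not _ (· ≤ K)]
  gcongr
  · have hcard : #{k ∈ Icc 1 N | k ≤ K} ≤ K := by
      calc _ ≤ #(Icc 1 K) := card_le_card fun k hk => by
              simp only [mem_filter, mem_Icc] at hk ⊢; omega
        _ = K := by simp
    calc ∑ k ∈ Icc 1 N with k ≤ K, f k ≤ ∑ k ∈ Icc 1 N with k ≤ K, α * (K : ℝ) ^ 2 := by
          refine sum_le_sum fun k hk => ?_
          simp only [mem_filter, mem_Icc] at hk
          exact (h_low k hk.1.1).trans (by gcongr; exact_mod_cast hk.2)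
      _ ≤ K * (α * (K : ℝ) ^ 2) := by
          rw [sum_const, nsmul_eq_mul]; gcongr
      _ = α * (K : ℝ) ^ 3 := by ring
      _ ≤ α * ρ ^ 3 := by gcongr; exact Nat.floor_le hρ.le
  · calc ∑ k ∈ Icc 1 N with ¬k ≤ K, f k ≤ ∑ k ∈ Ioo K (N + 1), β * ((k : ℝ) ^ 2)⁻¹ := by
          refine sum_le_sum_of_subset_of_nonneg (fun k hk => ?_) (fun k _ _ => by positivity)
            |>.trans' (sum_le_sum fun k hk => ?_)
          · simp only [mem_filter, mem_Icc, mem_Ioo] at hk ⊢; omega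
          · simp only [mem_filter, mem_Icc] at hk
            simpa [div_eq_mul_inv] using h_high k hk.1.1
      _ ≤ β * (2 / (K + 1)) := by rw [← mul_sum]; gcongr; exact sum_Ioo_inv_sq_le K (N + 1)
      _ ≤ 2 * β / ρ := by
          rw [mul_div_assoc', mul_comm β]; gcongr; exact (Nat.lt_floor_add_one ρ).le

lemma two_div_le_inv_sq_add_four_mul {u : ℝ} (hu : 0 < u) : 2 / u ≤ 1 / u ^ 2 + 4 * u := by
  have h : 2 * u ≤ 1 + 4 * u ^ 3 := by nlinarith [sq_nonneg (2 * u - 1)]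
  rw [div_add' _ _ _ (by positivity), div_le_div_iff₀ hu (by positivity)]
  nlinarith

open Real in
theorem stmt_14 (ν T : ℝ) (hν : 0 < ν) (hT : 0 < T) (M : ℕ) (hM : 1 ≤ M) (N : ℕ) :
    ∑ k ∈ Finset.Icc 1 N,
        ((1 - Real.exp (-(2 * ν * π ^ 2 * k ^ 2 * T))) / (2 * ν * π ^ 2 * k ^ 2)) *
          (1 - Real.exp (-(ν * π ^ 2 * k ^ 2 * T / M))) ^ 2 ≤
      (Real.sqrt T / (2 * Real.sqrt M)) *
        (1 / (π * Real.sqrt ν) + 1 / (ν * π ^ 2) + 4 * π * Real.sqrt ν) := by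
  have hM₀ : (0 : ℝ) < M := by exact_mod_cast hM
  rw [div_mul_eq_div_div_swap, mul_assoc 4 π]
  set u := π * √ν
  set s := √T / √M
  have hu : 0 < u := by positivity
  have hνπ : ν * π ^ 2 = u ^ 2 := by rw [mul_pow, sq_sqrt hν.le]; ring
  have hτ : T / M = s ^ 2 := by rw [div_pow, sq_sqrt hT.le, sq_sqrt hM₀.le]
  have hpos : ∀ k : ℕ, 1 ≤ k → 0 < ν * π ^ 2 * k ^ 2 := fun k hk => by
    have : (0 : ℝ) < k := by exact_mod_cast hk
    positivity
  calc _ = ∑ k ∈ Icc 1 N, expEulerModeError (ν * π ^ 2 * k ^ 2) T (T / M) :=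
        sum_congr rfl fun k _ => by simp only [expEulerModeError, mul_assoc, mul_div_assoc]
    _ ≤ u ^ 2 * s ^ 4 / 2 * (1 / (u * s)) ^ 3 + 2 * (1 / (2 * u ^ 2)) / (1 / (u * s)) := by
        refine sum_Icc_le_of_le_mul_sq_of_le_div_sq (by positivity) (by positivity)
          (fun k hk => ?_) (fun k hk => ?_) (by positivity) N
        · refine (expEulerModeError_le_mul_sq (hpos k hk) (by positivity)).trans_eq ?_
          rw [hνπ, hτ]; ring
        · refine (expEulerModeError_le_inv (hpos k hk) (by positivity)).trans_eq ?_
          rw [hνπ]; field_simp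
    _ = s / 2 * (1 / u + 2 / u) := by field_simp
    _ ≤ s / 2 * (1 / u + 1 / (ν * π ^ 2) + 4 * u) := by
        rw [hνπ, add_assoc]
        gcongr
        exact two_div_le_inv_sq_add_four_mul hu
end

section
/- Let f : [0,T] → [0,∞) be nonincreasing, M ≥ 1 a natural number, h = T/M, and for s ∈ [0,T] let ⌊s⌋_h = h·⌊s/h⌋. Then 2 ∫₀^T 1_{[⌊s⌋_h, ⌊s⌋_h + h/2]}(s) f(s) ds ≥ ∫₀^T f(s) ds. -/
/-!
On each cell `[k h, (k + 1) h]` of the grid the integrand equals `f` on the first half and vanishes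
on the second half. Since `f` is nonincreasing, translating the second half by `-h/2` shows that
`f` integrates to at most as much over the second half as over the first, so twice the
first-half integral dominates the integral over the whole cell. Summing over the `M` cells gives
the claim.
-/

open MeasureTheory intervalIntegral Set

def gridFirstHalves (h : ℝ) : Set ℝ := {s | s ∈ Icc (h * ⌊s / h⌋) (h * ⌊s / h⌋ + h / 2)}

lemma measurableSet_gridFirstHalves (h : ℝ) : MeasurableSet (gridFirstHalves h) := by
  have hfloor : Measurable fun s : ℝ => h * (⌊s / h⌋ : ℝ) :=
    (measurable_from_top.comp (measurable_id.div_const h).floor).const_mul h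
  exact (measurableSet_le hfloor measurable_id).inter
    (measurableSet_le measurable_id (hfloor.add_const _))

lemma floor_div_eq_of_mem_Ico {h : ℝ} (hh : 0 < h) {k : ℤ} {s : ℝ}
    (hs : s ∈ Ico (k * h) ((k + 1) * h)) : ⌊s / h⌋ = k := by
  rw [Int.floor_eq_iff, le_div_iff₀ hh, div_lt_iff₀ hh]
  exact hs

lemma mem_gridFirstHalves_iff {h : ℝ} (hh : 0 < h) {k : ℤ} {s : ℝ}
    (hs : s ∈ Ico (k * h) ((k + 1) * h)) : s ∈ gridFirstHalves h ↔ s ≤ k * h + h / 2 := by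
  simp only [gridFirstHalves, mem_ofPred_eq, mem_Icc, floor_div_eq_of_mem_Ico hh hs, mul_comm h]
  exact and_iff_right hs.1

lemma integral_indicator_gridFirstHalves {h : ℝ} (hh : 0 < h) (k : ℤ) (f : ℝ → ℝ) :
    ∫ s in k * h..(k + 1) * h, (gridFirstHalves h).indicator f s =
      ∫ s in k * h..k * h + h / 2, f s := by
  have hmid : k * h + h / 2 ∈ Icc (k * h) ((k + 1) * h) := ⟨by linarith, by linarith⟩
  rw [← integral_indicator hmid]
  refine integral_congr_Ioo_of_le (hmid.1.trans hmid.2) fun s hs => ?_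
  classical
  simp only [indicator_apply, mem_ofPred_eq, mem_gridFirstHalves_iff hh (Ioo_subset_Ico_self hs)]

lemma AntitoneOn.integral_le_two_mul_integral_first_half {f : ℝ → ℝ} {a δ : ℝ} (hδ : 0 ≤ δ)
    (hmono : AntitoneOn f (Icc a (a + 2 * δ)))
    (hint : IntervalIntegrable f volume a (a + 2 * δ)) :
    ∫ x in a..a + 2 * δ, f x ≤ 2 * ∫ x in a..a + δ, f x := by
  have hsub : ∀ c ∈ uIcc a (a + 2 * δ), ∀ d ∈ uIcc a (a + 2 * δ),
      IntervalIntegrable f volume c d := fun c hc d hd =>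
    hint.mono_set (uIcc_subset_uIcc hc hd)
  have hmem : ∀ x ∈ Icc a (a + 2 * δ), x ∈ uIcc a (a + 2 * δ) := by
    rw [uIcc_of_le (by linarith)]; exact fun x hx => hx
  have hfirst := hsub a (hmem a ⟨le_rfl, by linarith⟩) (a + δ) (hmem _ ⟨by linarith, by linarith⟩)
  have hsecond := hsub (a + δ) (hmem _ ⟨by linarith, by linarith⟩) (a + 2 * δ)
    (hmem _ ⟨by linarith, le_rfl⟩)
  have hshift : ∫ x in a + δ..a + 2 * δ, f x = ∫ x in a..a + δ, f (x + δ) := by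
    rw [integral_comp_add_right]; ring_nf
  have hsecond_le : ∫ x in a..a + δ, f (x + δ) ≤ ∫ x in a..a + δ, f x := by
    refine integral_mono_on (by linarith) ?_ hfirst fun x hx => ?_
    · simpa [two_mul, ← add_assoc] using hsecond.comp_add_right δ
    · exact hmono ⟨hx.1, by linarith [hx.2]⟩ ⟨by linarith [hx.1], by linarith [hx.2]⟩
        (by linarith)
  rw [← integral_add_adjacent_intervals hfirst hsecond, hshift]
  linarith

lemma integral_le_two_mul_integral_indicator_gridFirstHalves_cell {f : ℝ → ℝ} {h : ℝ}
    (hh : 0 < h) (k : ℤ) (hmono : AntitoneOn f (Icc (k * h) ((k + 1) * h)))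
    (hint : IntervalIntegrable f volume (k * h) ((k + 1) * h)) :
    ∫ s in k * h..(k + 1) * h, f s ≤
      2 * ∫ s in k * h..(k + 1) * h, (gridFirstHalves h).indicator f s := by
  have hend : (k + 1) * h = k * h + 2 * (h / 2) := by ring
  rw [integral_indicator_gridFirstHalves hh, hend]
  rw [hend] at hmono hint
  exact AntitoneOn.integral_le_two_mul_integral_first_half (by positivity) hmono hint

lemma integral_le_two_mul_integral_indicator_gridFirstHalves {f : ℝ → ℝ} {h : ℝ} (hh : 0 < h)
    (M : ℕ) (hmono : AntitoneOn f (Icc 0 (M * h)))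
    (hint : IntervalIntegrable f volume 0 (M * h)) :
    ∫ s in 0..M * h, f s ≤ 2 * ∫ s in 0..M * h, (gridFirstHalves h).indicator f s := by
  set a : ℕ → ℝ := fun k => k * h
  have hcell (k : ℕ) (hk : k < M) : Icc (a k) (a (k + 1)) ⊆ Icc 0 (M * h) :=
    Icc_subset_Icc (by positivity) (by simp only [a]; gcongr; exact_mod_cast hk)
  have hf_cell (k : ℕ) (hk : k < M) : IntervalIntegrable f volume (a k) (a (k + 1)) :=
    hint.mono_set (by
      rw [uIcc_of_le (by simp only [a]; gcongr; simp), uIcc_of_le (by positivity)]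
      exact hcell k hk)
  have hg_cell (k : ℕ) (hk : k < M) :
      IntervalIntegrable ((gridFirstHalves h).indicator f) volume (a k) (a (k + 1)) :=
    ⟨(hf_cell k hk).1.indicator (measurableSet_gridFirstHalves h),
      (hf_cell k hk).2.indicator (measurableSet_gridFirstHalves h)⟩
  have ha0 : a 0 = 0 := by simp [a]
  rw [← ha0, ← sum_integral_adjacent_intervals hf_cell,
    ← sum_integral_adjacent_intervals hg_cell, Finset.mul_sum]
  refine Finset.sum_le_sum fun k hk => ?_
  have hk : k < M := Finset.mem_range.mp hk
  simpa [a] using integral_le_two_mul_integral_indicator_gridFirstHalves_cell hh k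
    (by simpa [a] using hmono.mono (hcell k hk)) (by simpa [a] using hf_cell k hk)

theorem stmt_16_general (T : ℝ) (hT : 0 < T) (M : ℕ) (hM : 1 ≤ M)
    (f : ℝ → ℝ)
    (hmono : AntitoneOn f (Set.Icc (0:ℝ) T))
    (hint : IntervalIntegrable f MeasureTheory.volume 0 T) :
    2 * ∫ s in (0:ℝ)..T,
        (if s ∈ Set.Icc ((T / M) * ⌊s / (T / M)⌋) ((T / M) * ⌊s / (T / M)⌋ + (T / M) / 2)
          then f s else 0) ≥
      ∫ s in (0:ℝ)..T, f s := by
  set h := T / M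
  have hh : 0 < h := div_pos hT (by exact_mod_cast hM)
  have hT_eq : T = M * h := by simp only [h]; field_simp
  have hg : (fun s => if s ∈ Icc (h * ⌊s / h⌋) (h * ⌊s / h⌋ + h / 2) then f s else 0) =
      (gridFirstHalves h).indicator f := by
    classical
    funext s
    simp only [indicator_apply, gridFirstHalves, mem_ofPred_eq]
  rw [ge_iff_le, hg, hT_eq]
  rw [hT_eq] at hmono hint
  exact integral_le_two_mul_integral_indicator_gridFirstHalves hh M hmono hint

theorem stmt_16 (T : ℝ) (hT : 0 < T) (M : ℕ) (hM : 1 ≤ M)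
    (f : ℝ → ℝ) (hf0 : ∀ s ∈ Set.Icc (0:ℝ) T, 0 ≤ f s)
    (hmono : AntitoneOn f (Set.Icc (0:ℝ) T))
    (hint : IntervalIntegrable f MeasureTheory.volume 0 T) :
    2 * ∫ s in (0:ℝ)..T,
        (if s ∈ Set.Icc ((T / M) * ⌊s / (T / M)⌋) ((T / M) * ⌊s / (T / M)⌋ + (T / M) / 2)
          then f s else 0) ≥
      ∫ s in (0:ℝ)..T, f s :=
  stmt_16_general T hT M hM f hmono hint
end
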